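/- arXiv:2403.09821 — 5 statements merged into one kernel-verified Lean document; each statement's English description precedes it below -/
import Mathlib

section
/- Let 1 ≤ p < ∞ and r > 0. Then for every nonnegative measurable function f on (0,∞), ( ∫₀^∞ ( ∫₀^x f(y) dy )^p x^{-r-1} dx )^{1/p} ≤ (p/r) ( ∫₀^∞ (y f(y))^p y^{-r-1} dy )^{1/p}. -/
/-!
Hölder's inequality with the weight `y ^ (1 - r/p)` on `(0, x)` gives
`(∫₀ˣ f)^p ≤ (p/r)^(p-1) x^(r(p-1)/p) ∫₀ˣ f(y)^p y^((1-r/p)(p-1)) dy`.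
Multiplying by `x^(-r-1)`, integrating over `x > 0` and exchanging the order of integration,
the inner integral `∫_y^∞ x^(-r/p-1) dx = (p/r) y^(-r/p)` supplies the last factor `p/r`
and turns the weight into `y^(p-r-1)`.
-/
open MeasureTheory Set
open scoped ENNReal

theorem ENNReal.lintegral_rpow_le_lintegral_mul_rpow_lintegral_inv {α : Type*} [MeasurableSpace α]
    {μ : Measure α} {p : ℝ} (hp : 1 ≤ p) {g φ : α → ℝ≥0∞} (hg : AEMeasurable g μ)
    (hφ : AEMeasurable φ μ) (hφ0 : ∀ᵐ y ∂μ, φ y ≠ 0) (hφtop : ∀ᵐ y ∂μ, φ y ≠ ∞) :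
    (∫⁻ y, g y ∂μ) ^ p ≤ (∫⁻ y, g y ^ p * φ y ^ (p - 1) ∂μ) * (∫⁻ y, (φ y)⁻¹ ∂μ) ^ (p - 1) := by
  have hp0 : 0 < p := by linarith
  have hexp : (p - 1) * p⁻¹ = 1 - p⁻¹ := by field_simp
  have hsplit : ∀ᵐ y ∂μ, g y = (g y ^ p * φ y ^ (p - 1)) ^ p⁻¹ * (φ y)⁻¹ ^ (1 - p⁻¹) := by
    filter_upwards [hφ0, hφtop] with y h0 htop
    have hq : 0 ≤ 1 - p⁻¹ := sub_nonneg.2 (inv_le_one_of_one_le₀ hp)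
    rw [ENNReal.mul_rpow_of_nonneg _ _ (inv_nonneg.2 hp0.le), ← ENNReal.rpow_mul,
      ← ENNReal.rpow_mul, mul_inv_cancel₀ hp0.ne', ENNReal.rpow_one, hexp, ENNReal.inv_rpow,
      mul_assoc, ENNReal.mul_inv_cancel (ENNReal.rpow_pos (pos_iff_ne_zero.2 h0) htop).ne'
        (ENNReal.rpow_ne_top_of_nonneg hq htop), mul_one]
  have holder := ENNReal.lintegral_mul_norm_pow_le ((hg.pow_const p).mul (hφ.pow_const (p - 1)))
    hφ.inv (inv_nonneg.2 hp0.le) (sub_nonneg.2 (inv_le_one_of_one_le₀ hp)) (add_sub_cancel _ _)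
  calc (∫⁻ y, g y ∂μ) ^ p
      = (∫⁻ y, (g y ^ p * φ y ^ (p - 1)) ^ p⁻¹ * (φ y)⁻¹ ^ (1 - p⁻¹) ∂μ) ^ p := by
        rw [lintegral_congr_ae hsplit]
    _ ≤ ((∫⁻ y, g y ^ p * φ y ^ (p - 1) ∂μ) ^ p⁻¹ * (∫⁻ y, (φ y)⁻¹ ∂μ) ^ (1 - p⁻¹)) ^ p :=
        ENNReal.rpow_le_rpow holder hp0.le
    _ = _ := by
        rw [ENNReal.mul_rpow_of_nonneg _ _ hp0.le, ← ENNReal.rpow_mul, ← ENNReal.rpow_mul,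
          inv_mul_cancel₀ hp0.ne', ENNReal.rpow_one, ← hexp, inv_mul_cancel_right₀ hp0.ne']

section OrderTonelli

variable {α : Type*} [TopologicalSpace α] [LinearOrder α] [OrderClosedTopology α]
  [SecondCountableTopology α] [MeasurableSpace α] [OpensMeasurableSpace α]
  {μ : Measure α} [SFinite μ]

theorem lintegral_mul_setLIntegral_Iio_comm {A B : α → ℝ≥0∞} (hA : Measurable A)
    (hB : Measurable B) :
    ∫⁻ x, A x * ∫⁻ y in Iio x, B y ∂μ ∂μ = ∫⁻ y, B y * ∫⁻ x in Ioi y, A x ∂μ ∂μ := by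
  have hF : Measurable (Function.uncurry fun x y : α => (Iio x).indicator (fun y => A x * B y) y) :=
    ((hA.comp measurable_fst).mul (hB.comp measurable_snd)).indicator
      (measurableSet_lt measurable_snd measurable_fst)
  calc ∫⁻ x, A x * ∫⁻ y in Iio x, B y ∂μ ∂μ
      = ∫⁻ x, ∫⁻ y, (Iio x).indicator (fun y => A x * B y) y ∂μ ∂μ := by
        simp only [lintegral_indicator measurableSet_Iio, lintegral_const_mul _ hB]
    _ = ∫⁻ y, ∫⁻ x, (Ioi y).indicator (fun x => B y * A x) x ∂μ ∂μ := by
        rw [lintegral_lintegral_swap hF.aemeasurable]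
        refine lintegral_congr fun y => lintegral_congr fun x => ?_
        by_cases h : y < x <;> simp [h, mul_comm]
    _ = _ := by
        simp only [lintegral_indicator measurableSet_Ioi, lintegral_const_mul _ hA]

theorem setLIntegral_Ioi_mul_setLIntegral_Ioo_comm (a : α) {A B : α → ℝ≥0∞}
    (hA : Measurable A) (hB : Measurable B) :
    ∫⁻ x in Ioi a, A x * ∫⁻ y in Ioo a x, B y ∂μ ∂μ
      = ∫⁻ y in Ioi a, B y * ∫⁻ x in Ioi y, A x ∂μ ∂μ := by
  have h := lintegral_mul_setLIntegral_Iio_comm (μ := μ.restrict (Ioi a)) hA hB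
  simp only [Measure.restrict_restrict measurableSet_Iio,
    Measure.restrict_restrict measurableSet_Ioi, Iio_inter_Ioi] at h
  rw [h]
  refine setLIntegral_congr_fun measurableSet_Ioi fun y hy => ?_
  rw [Ioi_inter_Ioi, sup_eq_left.2 (le_of_lt hy)]

end OrderTonelli

theorem ENNReal.ofReal_rpow_mul_ofReal_rpow {y : ℝ} (hy : 0 < y) (a b : ℝ) :
    ENNReal.ofReal (y ^ a) * ENNReal.ofReal (y ^ b) = ENNReal.ofReal (y ^ (a + b)) := by
  rw [← ENNReal.ofReal_mul (Real.rpow_nonneg hy.le a), Real.rpow_add hy]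

theorem lintegral_Ioo_zero_rpow_sub_one {s x : ℝ} (hs : 0 < s) (hx : 0 < x) :
    ∫⁻ y in Ioo 0 x, ENNReal.ofReal (y ^ (s - 1)) = ENNReal.ofReal (x ^ s / s) := by
  have hs' : -1 < s - 1 := by linarith
  rw [← ofReal_integral_eq_lintegral_ofReal
    ((intervalIntegrable_iff_integrableOn_Ioo_of_le hx.le).1
      (intervalIntegral.intervalIntegrable_rpow' hs'))
    (ae_restrict_of_forall_mem measurableSet_Ioo fun y hy => Real.rpow_nonneg hy.1.le _),
    ← integral_Ioc_eq_integral_Ioo, ← intervalIntegral.integral_of_le hx.le,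
    integral_rpow (Or.inl hs'), sub_add_cancel, Real.zero_rpow hs.ne', sub_zero]

theorem lintegral_Ioi_rpow_neg_sub_one {s y : ℝ} (hs : 0 < s) (hy : 0 < y) :
    ∫⁻ x in Ioi y, ENNReal.ofReal (x ^ (-s - 1)) = ENNReal.ofReal (y ^ (-s) / s) := by
  have hs' : -s - 1 < -1 := by linarith
  rw [← ofReal_integral_eq_lintegral_ofReal (integrableOn_Ioi_rpow_of_lt hs' hy)
    (ae_restrict_of_forall_mem measurableSet_Ioi fun x hx => Real.rpow_nonneg (hy.trans hx).le _),
    integral_Ioi_rpow_of_lt hs' hy, sub_add_cancel, neg_div, div_neg, neg_neg]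

variable {p r : ℝ}

theorem hardy_inner_rpow_mul_le (hp : 1 ≤ p) (hr : 0 < r) {g : ℝ → ℝ≥0∞} (hg : Measurable g)
    {x : ℝ} (hx : 0 < x) :
    (∫⁻ y in Ioo 0 x, g y) ^ p * ENNReal.ofReal (x ^ (-r - 1))
      ≤ ENNReal.ofReal (p / r) ^ (p - 1) * (ENNReal.ofReal (x ^ (-(r / p) - 1)) *
        ∫⁻ y in Ioo 0 x, g y ^ p * ENNReal.ofReal (y ^ ((1 - r / p) * (p - 1)))) := by
  have hp0 : 0 < p := by linarith
  have hs : 0 < r / p := div_pos hr hp0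
  have hφ : ∀ y ∈ Ioo 0 x, ENNReal.ofReal (y ^ (1 - r / p)) ^ (p - 1)
      = ENNReal.ofReal (y ^ ((1 - r / p) * (p - 1))) := fun y hy => by
    rw [ENNReal.ofReal_rpow_of_pos (Real.rpow_pos_of_pos hy.1 _), ← Real.rpow_mul hy.1.le]
  have hφinv : ∀ y ∈ Ioo 0 x, (ENNReal.ofReal (y ^ (1 - r / p)))⁻¹
      = ENNReal.ofReal (y ^ (r / p - 1)) := fun y hy => by
    rw [← ENNReal.ofReal_inv_of_pos (Real.rpow_pos_of_pos hy.1 _), ← Real.rpow_neg hy.1.le,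
      neg_sub]
  have holder := ENNReal.lintegral_rpow_le_lintegral_mul_rpow_lintegral_inv
    (μ := volume.restrict (Ioo 0 x)) (φ := fun y => ENNReal.ofReal (y ^ (1 - r / p))) hp
    hg.aemeasurable (by fun_prop)
    (ae_restrict_of_forall_mem measurableSet_Ioo fun y hy =>
      (ENNReal.ofReal_pos.2 (Real.rpow_pos_of_pos hy.1 _)).ne')
    (ae_of_all _ fun _ => ENNReal.ofReal_ne_top)
  have hweight : ∫⁻ y in Ioo 0 x, g y ^ p * ENNReal.ofReal (y ^ (1 - r / p)) ^ (p - 1)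
      = ∫⁻ y in Ioo 0 x, g y ^ p * ENNReal.ofReal (y ^ ((1 - r / p) * (p - 1))) :=
    setLIntegral_congr_fun measurableSet_Ioo fun y hy => by rw [hφ y hy]
  have hdual : ∫⁻ y in Ioo 0 x, (ENNReal.ofReal (y ^ (1 - r / p)))⁻¹
      = ENNReal.ofReal (p / r) * ENNReal.ofReal (x ^ (r / p)) := by
    rw [setLIntegral_congr_fun measurableSet_Ioo hφinv, lintegral_Ioo_zero_rpow_sub_one hs hx,
      ← ENNReal.ofReal_mul (by positivity)]
    congr 1
    field_simp
  rw [hweight, hdual] at holder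
  have hcoef : (ENNReal.ofReal (p / r) * ENNReal.ofReal (x ^ (r / p))) ^ (p - 1)
        * ENNReal.ofReal (x ^ (-r - 1))
      = ENNReal.ofReal (p / r) ^ (p - 1) * ENNReal.ofReal (x ^ (-(r / p) - 1)) := by
    rw [ENNReal.mul_rpow_of_nonneg _ _ (by linarith),
      ENNReal.ofReal_rpow_of_pos (Real.rpow_pos_of_pos hx _), ← Real.rpow_mul hx.le, mul_assoc,
      ENNReal.ofReal_rpow_mul_ofReal_rpow hx]
    congr 3
    field_simp
    ring
  calc (∫⁻ y in Ioo 0 x, g y) ^ p * ENNReal.ofReal (x ^ (-r - 1))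
      ≤ (∫⁻ y in Ioo 0 x, g y ^ p * ENNReal.ofReal (y ^ ((1 - r / p) * (p - 1))))
          * (ENNReal.ofReal (p / r) * ENNReal.ofReal (x ^ (r / p))) ^ (p - 1)
          * ENNReal.ofReal (x ^ (-r - 1)) :=
        mul_le_mul_left holder _
    _ = _ := by rw [mul_assoc, hcoef]; ring

theorem hardy_weight_mul_tail_eq (hp : 1 ≤ p) (hr : 0 < r) {y : ℝ} (hy : 0 < y) :
    ENNReal.ofReal (y ^ ((1 - r / p) * (p - 1)))
        * ∫⁻ x in Ioi y, ENNReal.ofReal (x ^ (-(r / p) - 1))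
      = ENNReal.ofReal (p / r) * ENNReal.ofReal (y ^ (p - r - 1)) := by
  have hp0 : 0 < p := by linarith
  rw [lintegral_Ioi_rpow_neg_sub_one (div_pos hr hp0) hy,
    show y ^ (-(r / p)) / (r / p) = p / r * y ^ (-(r / p)) by field_simp,
    ENNReal.ofReal_mul (by positivity), mul_left_comm, ENNReal.ofReal_rpow_mul_ofReal_rpow hy]
  congr 3
  field_simp
  ring

theorem lintegral_hardy_rpow_le (hp : 1 ≤ p) (hr : 0 < r) {g : ℝ → ℝ≥0∞} (hg : Measurable g) :
    ∫⁻ x in Ioi 0, (∫⁻ y in Ioo 0 x, g y) ^ p * ENNReal.ofReal (x ^ (-r - 1))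
      ≤ ENNReal.ofReal (p / r) ^ p * ∫⁻ y in Ioi 0, g y ^ p * ENNReal.ofReal (y ^ (p - r - 1)) := by
  set C := ENNReal.ofReal (p / r)
  calc ∫⁻ x in Ioi 0, (∫⁻ y in Ioo 0 x, g y) ^ p * ENNReal.ofReal (x ^ (-r - 1))
      ≤ ∫⁻ x in Ioi 0, C ^ (p - 1) * (ENNReal.ofReal (x ^ (-(r / p) - 1)) *
          ∫⁻ y in Ioo 0 x, g y ^ p * ENNReal.ofReal (y ^ ((1 - r / p) * (p - 1)))) :=
        setLIntegral_mono' measurableSet_Ioi fun x hx => hardy_inner_rpow_mul_le hp hr hg hx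
    _ = C ^ (p - 1) * ∫⁻ y in Ioi 0, g y ^ p * ENNReal.ofReal (y ^ ((1 - r / p) * (p - 1))) *
          ∫⁻ x in Ioi y, ENNReal.ofReal (x ^ (-(r / p) - 1)) := by
        rw [lintegral_const_mul' _ _
            (ENNReal.rpow_ne_top_of_nonneg (by linarith) ENNReal.ofReal_ne_top),
          setLIntegral_Ioi_mul_setLIntegral_Ioo_comm 0 (by fun_prop) (by fun_prop)]
    _ = C ^ (p - 1) * (C * ∫⁻ y in Ioi 0, g y ^ p * ENNReal.ofReal (y ^ (p - r - 1))) := by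
        rw [← lintegral_const_mul' _ _ ENNReal.ofReal_ne_top]
        congr 1
        refine setLIntegral_congr_fun measurableSet_Ioi fun y hy => ?_
        rw [mul_assoc, hardy_weight_mul_tail_eq hp hr hy]
        ring
    _ = C ^ p * ∫⁻ y in Ioi 0, g y ^ p * ENNReal.ofReal (y ^ (p - r - 1)) := by
        have hC : C ≠ 0 := (ENNReal.ofReal_pos.2 (div_pos (by linarith) hr)).ne'
        nth_rw 2 [← ENNReal.rpow_one C]
        rw [← mul_assoc, ← ENNReal.rpow_add _ _ hC ENNReal.ofReal_ne_top, sub_add_cancel]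

theorem stmt1_general (p r : ℝ) (hp : 1 ≤ p) (hr : 0 < r) (f : ℝ → ℝ)
    (hf : Measurable f) :
    (∫⁻ x in Set.Ioi (0:ℝ),
        (∫⁻ y in Set.Ioo (0:ℝ) x, ENNReal.ofReal (f y)) ^ p *
          ENNReal.ofReal (x ^ (-r - 1))) ^ (1/p)
      ≤ ENNReal.ofReal (p / r) *
        (∫⁻ y in Set.Ioi (0:ℝ),
          ENNReal.ofReal (y * f y) ^ p * ENNReal.ofReal (y ^ (-r - 1))) ^ (1/p) := by
  have hp0 : 0 < p := by linarith
  have hweight : ∫⁻ y in Ioi 0, ENNReal.ofReal (f y) ^ p * ENNReal.ofReal (y ^ (p - r - 1))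
      = ∫⁻ y in Ioi 0, ENNReal.ofReal (y * f y) ^ p * ENNReal.ofReal (y ^ (-r - 1)) := by
    refine setLIntegral_congr_fun measurableSet_Ioi fun y (hy : 0 < y) => ?_
    rw [ENNReal.ofReal_mul hy.le, ENNReal.mul_rpow_of_nonneg _ _ hp0.le,
      ENNReal.ofReal_rpow_of_pos hy, mul_right_comm, ENNReal.ofReal_rpow_mul_ofReal_rpow hy,
      mul_comm]
    congr 3
    ring
  have hardy := lintegral_hardy_rpow_le hp hr hf.ennreal_ofReal
  rw [hweight] at hardy
  calc _ ≤ (ENNReal.ofReal (p / r) ^ p * ∫⁻ y in Ioi 0,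
          ENNReal.ofReal (y * f y) ^ p * ENNReal.ofReal (y ^ (-r - 1))) ^ (1 / p) :=
        ENNReal.rpow_le_rpow hardy (by positivity)
    _ = _ := by
        rw [ENNReal.mul_rpow_of_nonneg _ _ (by positivity), ← ENNReal.rpow_mul,
          mul_one_div_cancel hp0.ne', ENNReal.rpow_one]

theorem stmt1 (p r : ℝ) (hp : 1 ≤ p) (hr : 0 < r) (f : ℝ → ℝ)
    (hf : Measurable f) (hf0 : ∀ x, 0 ≤ f x) :
    (∫⁻ x in Set.Ioi (0:ℝ),
        (∫⁻ y in Set.Ioo (0:ℝ) x, ENNReal.ofReal (f y)) ^ p *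
          ENNReal.ofReal (x ^ (-r - 1))) ^ (1/p)
      ≤ ENNReal.ofReal (p / r) *
        (∫⁻ y in Set.Ioi (0:ℝ),
          ENNReal.ofReal (y * f y) ^ p * ENNReal.ofReal (y ^ (-r - 1))) ^ (1/p) :=
  stmt1_general p r hp hr f hf
end

section
/- Let 1 ≤ p < ∞ and r > 0. There exists a constant C > 0 such that for every sequence (a_n)_{n≥1} of nonnegative reals, ( Σ_{n=1}^∞ ( Σ_{j=n+1}^∞ a_j )^p n^{r-1} )^{1/p} ≤ C ( Σ_{n=1}^∞ (n a_n)^p n^{r-1} )^{1/p}. -/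
open Finset
open scoped ENNReal NNReal

namespace Stmt4Aux

lemma mvt_rpow {γ a : ℝ} (ha : 0 ≤ a) (h : 0 < a ∨ 0 < γ) :
    ∃ c, a < c ∧ c < a + 1 ∧ (a + 1) ^ γ - a ^ γ = γ * c ^ (γ - 1) := by
  have hab : a < a + 1 := by linarith
  have hcont : ContinuousOn (fun x : ℝ => x ^ γ) (Set.Icc a (a + 1)) := by
    intro x hx
    refine (Real.continuousAt_rpow_const x γ ?_).continuousWithinAt
    rcases h with h | h
    · exact Or.inl (ne_of_gt (lt_of_lt_of_le h hx.1))
    · exact Or.inr h.le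
  have hderiv : ∀ x ∈ Set.Ioo a (a + 1),
      HasDerivAt (fun x : ℝ => x ^ γ) (γ * x ^ (γ - 1)) x := fun x hx =>
    Real.hasDerivAt_rpow_const (Or.inl (ne_of_gt (lt_of_le_of_lt ha hx.1)))
  obtain ⟨c, hc, hceq⟩ := exists_hasDerivAt_eq_slope (fun x : ℝ => x ^ γ)
    (fun x => γ * x ^ (γ - 1)) hab hcont hderiv
  refine ⟨c, hc.1, hc.2, ?_⟩
  rw [hceq]
  have : a + 1 - a = 1 := by ring
  rw [this, div_one]

lemma front_sum {β : ℝ} (hβ : -1 < β) (m : ℕ) :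
    ∑ n ∈ Finset.range m, ((n : ℝ) + 1) ^ β ≤ 2 / (β + 1) * ((m : ℝ) + 1) ^ (β + 1) := by
  have hγ : 0 < β + 1 := by linarith
  set f₁ : ℕ → ℝ := fun k => ((k : ℝ) + 1) ^ (β + 1) with hf₁
  set f₂ : ℕ → ℝ := fun k => (k : ℝ) ^ (β + 1) with hf₂
  have key : ∀ n : ℕ, (β + 1) * ((n : ℝ) + 1) ^ β ≤
      (f₁ (n + 1) - f₁ n) + (f₂ (n + 1) - f₂ n) := by
    intro n
    obtain ⟨c₁, hc₁, hc₁', he₁⟩ := mvt_rpow (γ := β + 1) (a := (n : ℝ) + 1)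
      (by positivity) (Or.inl (by positivity))
    obtain ⟨c₂, hc₂, hc₂', he₂⟩ := mvt_rpow (γ := β + 1) (a := (n : ℝ))
      (Nat.cast_nonneg n) (Or.inr hγ)
    have hb : β + 1 - 1 = β := by ring
    rw [hb] at he₁ he₂
    have e1 : f₁ (n + 1) - f₁ n = (β + 1) * c₁ ^ β := by
      simp only [hf₁]; push_cast; convert he₁ using 3 <;> ring
    have e2 : f₂ (n + 1) - f₂ n = (β + 1) * c₂ ^ β := by
      simp only [hf₂]; push_cast; convert he₂ using 3
    rw [e1, e2]
    rcases le_or_gt 0 β with h | h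
    · have h1 : ((n : ℝ) + 1) ^ β ≤ c₁ ^ β := Real.rpow_le_rpow (by positivity) hc₁.le h
      have h2 : (0 : ℝ) ≤ c₂ ^ β :=
        Real.rpow_nonneg (le_of_lt (lt_of_le_of_lt (Nat.cast_nonneg n) hc₂)) β
      nlinarith
    · have h1 : ((n : ℝ) + 1) ^ β ≤ c₂ ^ β :=
        Real.rpow_le_rpow_of_nonpos (lt_of_le_of_lt (Nat.cast_nonneg n) hc₂)
          (by linarith) h.le
      have h2 : (0 : ℝ) ≤ c₁ ^ β :=
        Real.rpow_nonneg (le_of_lt (lt_of_le_of_lt (by positivity) hc₁)) β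
      nlinarith
  have hsum : (β + 1) * ∑ n ∈ Finset.range m, ((n : ℝ) + 1) ^ β ≤
      (f₁ m - f₁ 0) + (f₂ m - f₂ 0) := by
    rw [Finset.mul_sum, ← Finset.sum_range_sub f₁, ← Finset.sum_range_sub f₂,
      ← Finset.sum_add_distrib]
    exact Finset.sum_le_sum fun n _ => key n
  have h10 : f₁ 0 = 1 := by simp only [hf₁]; norm_num
  have h20 : f₂ 0 = 0 := by
    simp only [hf₂]; norm_num; exact Real.zero_rpow (by positivity)
  have h1m : f₁ m = ((m : ℝ) + 1) ^ (β + 1) := rfl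
  have h2m : f₂ m ≤ ((m : ℝ) + 1) ^ (β + 1) :=
    Real.rpow_le_rpow (Nat.cast_nonneg m) (by linarith) hγ.le
  rw [div_mul_eq_mul_div, le_div_iff₀ hγ]
  nlinarith

lemma tail_sum {α : ℝ} (hα : 1 < α) (n N : ℕ) :
    ∑ j ∈ Finset.range N, ((n : ℝ) + 2 + j) ^ (-α) ≤ 1 / (α - 1) * ((n : ℝ) + 1) ^ (1 - α) := by
  have hα1 : 0 < α - 1 := by linarith
  set f : ℕ → ℝ := fun j => ((n : ℝ) + 1 + j) ^ (1 - α) with hf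
  have key : ∀ j : ℕ, (α - 1) * ((n : ℝ) + 2 + j) ^ (-α) ≤ f j - f (j + 1) := by
    intro j
    obtain ⟨c, hc1, hc2, he⟩ := mvt_rpow (γ := 1 - α) (a := (n : ℝ) + 1 + j)
      (by positivity) (Or.inl (by positivity))
    have h3 : 1 - α - 1 = -α := by ring
    rw [h3] at he
    have e1 : f j - f (j + 1) = (α - 1) * c ^ (-α) := by
      simp only [hf]; push_cast
      have eb : (n : ℝ) + 1 + ((j : ℝ) + 1) = ((n : ℝ) + 1 + j) + 1 := by ring
      rw [eb]
      linarith [he]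
    rw [e1]
    have hcb : ((n : ℝ) + 2 + j) ^ (-α) ≤ c ^ (-α) := by
      refine Real.rpow_le_rpow_of_nonpos (lt_of_le_of_lt (by positivity) hc1) (by linarith)
        (by linarith)
    nlinarith
  have hsum : (α - 1) * ∑ j ∈ Finset.range N, ((n : ℝ) + 2 + j) ^ (-α) ≤ f 0 - f N := by
    rw [Finset.mul_sum, ← Finset.sum_range_sub' f]
    exact Finset.sum_le_sum fun j _ => key j
  have hf0 : f 0 = ((n : ℝ) + 1) ^ (1 - α) := by simp only [hf]; norm_num
  have hfN : 0 ≤ f N := Real.rpow_nonneg (by positivity) _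
  rw [div_mul_eq_mul_div, le_div_iff₀ hα1]
  nlinarith

lemma tail_ennreal {α : ℝ} (hα : 1 < α) (n : ℕ) :
    ∑' j : ℕ, ENNReal.ofReal (((n : ℝ) + 2 + j) ^ (-α)) ≤
      ENNReal.ofReal (1 / (α - 1) * ((n : ℝ) + 1) ^ (1 - α)) := by
  refine Summable.tsum_le_of_sum_le ENNReal.summable fun s => ?_
  obtain ⟨N, hN⟩ := s.exists_nat_subset_range
  calc ∑ j ∈ s, ENNReal.ofReal (((n : ℝ) + 2 + j) ^ (-α))
      ≤ ∑ j ∈ Finset.range N, ENNReal.ofReal (((n : ℝ) + 2 + j) ^ (-α)) :=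
        Finset.sum_le_sum_of_subset hN
    _ = ENNReal.ofReal (∑ j ∈ Finset.range N, ((n : ℝ) + 2 + j) ^ (-α)) :=
        (ENNReal.ofReal_sum_of_nonneg fun j _ => Real.rpow_nonneg (by positivity) _).symm
    _ ≤ _ := ENNReal.ofReal_le_ofReal (tail_sum hα n N)

lemma swap_sum (u v : ℕ → ℝ≥0∞) :
    ∑' n : ℕ, u n * ∑' j : ℕ, v (n + 1 + j) =
      ∑' m : ℕ, (∑ k ∈ Finset.range m, u k) * v m := by
  have h1 : ∀ n : ℕ, ∑' j : ℕ, v (n + 1 + j) = ∑' m : ℕ, if n < m then v m else 0 := by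
    intro n
    have hinj : Function.Injective fun j : ℕ => n + 1 + j := fun a b h => by
      simpa using h
    have hsupp : Function.support (fun m : ℕ => if n < m then v m else 0) ⊆
        Set.range fun j : ℕ => n + 1 + j := by
      intro m hm
      by_cases h : n < m
      · exact ⟨m - (n + 1), show n + 1 + (m - (n + 1)) = m by omega⟩
      · simp [h] at hm
    rw [← hinj.tsum_eq hsupp]
    exact tsum_congr fun j => by rw [if_pos (by omega)]
  calc ∑' n : ℕ, u n * ∑' j : ℕ, v (n + 1 + j)
      = ∑' n : ℕ, ∑' m : ℕ, (if n < m then u n * v m else 0) := by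
        refine tsum_congr fun n => ?_
        rw [h1, ← ENNReal.tsum_mul_left]
        exact tsum_congr fun m => by split <;> simp
    _ = ∑' m : ℕ, ∑' n : ℕ, (if n < m then u n * v m else 0) := ENNReal.tsum_comm
    _ = ∑' m : ℕ, (∑ k ∈ Finset.range m, u k) * v m := by
        refine tsum_congr fun m => ?_
        rw [tsum_eq_sum (s := Finset.range m)
          (fun n hn => if_neg (by simp only [Finset.mem_range] at hn; omega))]
        rw [Finset.sum_mul]
        exact Finset.sum_congr rfl fun n hn => if_pos (Finset.mem_range.mp hn)

lemma holder_tsum {p q : ℝ} (hpq : p.HolderConjugate q) (f g : ℕ → ℝ≥0∞) :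
    ∑' j : ℕ, f j * g j ≤ (∑' j : ℕ, f j ^ p) ^ (1 / p) * (∑' j : ℕ, g j ^ q) ^ (1 / q) := by
  have h := ENNReal.lintegral_mul_le_Lp_mul_Lq (MeasureTheory.Measure.count (α := ℕ)) hpq
    (f := f) (g := g) (measurable_of_countable f).aemeasurable
    (measurable_of_countable g).aemeasurable
  simpa [MeasureTheory.lintegral_count] using h

lemma key_core {p q r s t α : ℝ} (hp1 : 1 < p) (hpq : p.HolderConjugate q)
    (hα1 : 1 < α) (hs0 : 0 < s + 1)
    (htq : t * q = α) (htp : t * p = p + s)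
    (hes : (1 - α) * (p - 1) + (r - 1) = s)
    (her : s + 1 + (p + s) = p + (r - 1)) (V : ℕ → ℝ≥0∞) :
    ∑' n : ℕ, (∑' j : ℕ, V (n + 1 + j)) ^ p * ENNReal.ofReal (((n : ℝ) + 1) ^ (r - 1)) ≤
      ENNReal.ofReal ((1 / (α - 1)) ^ (p - 1) * (2 / (s + 1))) *
        ∑' m : ℕ, ENNReal.ofReal (((m : ℝ) + 1) ^ (p + (r - 1))) * V m ^ p := by
  have hp0 : 0 < p := by linarith
  have hp1' : 0 < p - 1 := by linarith
  have hα0 : 0 < α - 1 := by linarith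
  have hcα0 : (0 : ℝ) < 1 / (α - 1) := by positivity
  have hpq' : 1 / q * p = p - 1 := by
    rw [div_mul_eq_mul_div, one_mul, hpq.div_conj_eq_sub_one]
  have main : ∀ n : ℕ, (∑' j : ℕ, V (n + 1 + j)) ^ p ≤
      (∑' j : ℕ, ENNReal.ofReal (((n : ℝ) + 2 + j) ^ (p + s)) * V (n + 1 + j) ^ p) *
        ENNReal.ofReal ((1 / (α - 1)) ^ (p - 1) * ((n : ℝ) + 1) ^ ((1 - α) * (p - 1))) := by
    intro n
    have hx : ∀ j : ℕ, (0 : ℝ) < (n : ℝ) + 2 + j := fun j => by positivity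
    set F : ℕ → ℝ≥0∞ := fun j =>
      ENNReal.ofReal (((n : ℝ) + 2 + j) ^ t) * V (n + 1 + j) with hF
    set G : ℕ → ℝ≥0∞ := fun j => ENNReal.ofReal (((n : ℝ) + 2 + j) ^ (-t)) with hG
    have hFG : ∀ j, V (n + 1 + j) = F j * G j := by
      intro j
      rw [hF, hG]
      simp only []
      rw [mul_right_comm, ← ENNReal.ofReal_mul (Real.rpow_nonneg (hx j).le _),
        ← Real.rpow_add (hx j), add_neg_cancel, Real.rpow_zero, ENNReal.ofReal_one, one_mul]
    have hFp : ∀ j, F j ^ p =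
        ENNReal.ofReal (((n : ℝ) + 2 + j) ^ (p + s)) * V (n + 1 + j) ^ p := by
      intro j
      rw [hF]
      simp only []
      rw [ENNReal.mul_rpow_of_nonneg _ _ hp0.le,
        ENNReal.ofReal_rpow_of_pos (Real.rpow_pos_of_pos (hx j) _),
        ← Real.rpow_mul (hx j).le, htp]
    have hGq : ∑' j : ℕ, G j ^ q ≤
        ENNReal.ofReal (1 / (α - 1) * ((n : ℝ) + 1) ^ (1 - α)) := by
      have hGq' : ∀ j : ℕ, G j ^ q = ENNReal.ofReal (((n : ℝ) + 2 + j) ^ (-α)) := by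
        intro j
        rw [hG]
        simp only []
        rw [ENNReal.ofReal_rpow_of_pos (Real.rpow_pos_of_pos (hx j) _),
          ← Real.rpow_mul (hx j).le, neg_mul, htq]
      rw [tsum_congr hGq']
      exact tail_ennreal hα1 n
    have hT : (∑' j : ℕ, V (n + 1 + j)) = ∑' j : ℕ, F j * G j := tsum_congr hFG
    rw [hT]
    calc (∑' j : ℕ, F j * G j) ^ p
        ≤ ((∑' j : ℕ, F j ^ p) ^ (1 / p) * (∑' j : ℕ, G j ^ q) ^ (1 / q)) ^ p :=
          ENNReal.rpow_le_rpow (holder_tsum hpq F G) hp0.le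
      _ = (∑' j : ℕ, F j ^ p) * (∑' j : ℕ, G j ^ q) ^ (p - 1) := by
          rw [ENNReal.mul_rpow_of_nonneg _ _ hp0.le, ← ENNReal.rpow_mul, ← ENNReal.rpow_mul,
            one_div_mul_cancel hp0.ne', ENNReal.rpow_one, hpq']
      _ ≤ (∑' j : ℕ, F j ^ p) *
            (ENNReal.ofReal (1 / (α - 1) * ((n : ℝ) + 1) ^ (1 - α))) ^ (p - 1) :=
          mul_le_mul_right (ENNReal.rpow_le_rpow hGq hp1'.le) _
      _ = _ := by
          rw [tsum_congr hFp]
          congr 1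
          rw [ENNReal.ofReal_rpow_of_pos
              (mul_pos hcα0 (Real.rpow_pos_of_pos (by positivity) _)),
            Real.mul_rpow hcα0.le (Real.rpow_nonneg (by positivity) _),
            ← Real.rpow_mul (by positivity : (0:ℝ) ≤ (n : ℝ) + 1)]
  calc ∑' n : ℕ, (∑' j : ℕ, V (n + 1 + j)) ^ p * ENNReal.ofReal (((n : ℝ) + 1) ^ (r - 1))
      ≤ ∑' n : ℕ,
          ((∑' j : ℕ, ENNReal.ofReal (((n : ℝ) + 2 + j) ^ (p + s)) * V (n + 1 + j) ^ p) *
            ENNReal.ofReal ((1 / (α - 1)) ^ (p - 1) * ((n : ℝ) + 1) ^ ((1 - α) * (p - 1)))) *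
            ENNReal.ofReal (((n : ℝ) + 1) ^ (r - 1)) :=
        ENNReal.tsum_le_tsum fun n => mul_le_mul_left (main n) _
    _ = ENNReal.ofReal ((1 / (α - 1)) ^ (p - 1)) *
          ∑' n : ℕ, ENNReal.ofReal (((n : ℝ) + 1) ^ s) *
            ∑' j : ℕ, (fun m : ℕ => ENNReal.ofReal (((m : ℝ) + 1) ^ (p + s)) * V m ^ p)
              (n + 1 + j) := by
        rw [← ENNReal.tsum_mul_left]
        refine tsum_congr fun n => ?_
        have hn1 : (0 : ℝ) < (n : ℝ) + 1 := by positivity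
        have hA : (∑' j : ℕ, ENNReal.ofReal (((n : ℝ) + 2 + j) ^ (p + s)) * V (n + 1 + j) ^ p)
            = ∑' j : ℕ, (fun m : ℕ => ENNReal.ofReal (((m : ℝ) + 1) ^ (p + s)) * V m ^ p)
              (n + 1 + j) := by
          refine tsum_congr fun j => ?_
          have hc : ((n + 1 + j : ℕ) : ℝ) + 1 = (n : ℝ) + 2 + j := by push_cast; ring
          simp only [hc]
        have hsc : ENNReal.ofReal ((1 / (α - 1)) ^ (p - 1) * ((n : ℝ) + 1) ^ ((1 - α) * (p - 1))) *
            ENNReal.ofReal (((n : ℝ) + 1) ^ (r - 1)) =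
            ENNReal.ofReal ((1 / (α - 1)) ^ (p - 1)) * ENNReal.ofReal (((n : ℝ) + 1) ^ s) := by
          rw [ENNReal.ofReal_mul (by positivity), mul_assoc,
            ← ENNReal.ofReal_mul (Real.rpow_nonneg hn1.le _), ← Real.rpow_add hn1, hes]
        rw [hA, mul_assoc, hsc]
        ring
    _ = ENNReal.ofReal ((1 / (α - 1)) ^ (p - 1)) *
          ∑' m : ℕ, (∑ k ∈ Finset.range m, ENNReal.ofReal (((k : ℝ) + 1) ^ s)) *
            (ENNReal.ofReal (((m : ℝ) + 1) ^ (p + s)) * V m ^ p) := by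
        rw [swap_sum (fun n : ℕ => ENNReal.ofReal (((n : ℝ) + 1) ^ s))
          (fun m : ℕ => ENNReal.ofReal (((m : ℝ) + 1) ^ (p + s)) * V m ^ p)]
    _ ≤ ENNReal.ofReal ((1 / (α - 1)) ^ (p - 1)) *
          ∑' m : ℕ, ENNReal.ofReal (2 / (s + 1) * ((m : ℝ) + 1) ^ (s + 1)) *
            (ENNReal.ofReal (((m : ℝ) + 1) ^ (p + s)) * V m ^ p) := by
        refine mul_le_mul_right (ENNReal.tsum_le_tsum fun m => mul_le_mul_left ?_ _) _
        calc (∑ k ∈ Finset.range m, ENNReal.ofReal (((k : ℝ) + 1) ^ s))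
            = ENNReal.ofReal (∑ k ∈ Finset.range m, ((k : ℝ) + 1) ^ s) :=
              (ENNReal.ofReal_sum_of_nonneg fun k _ => Real.rpow_nonneg (by positivity) _).symm
          _ ≤ _ := by
              refine ENNReal.ofReal_le_ofReal ?_
              have h := front_sum (by linarith : (-1:ℝ) < s) m
              simpa using h
    _ = ENNReal.ofReal ((1 / (α - 1)) ^ (p - 1) * (2 / (s + 1))) *
          ∑' m : ℕ, ENNReal.ofReal (((m : ℝ) + 1) ^ (p + (r - 1))) * V m ^ p := by
        rw [ENNReal.ofReal_mul (by positivity), mul_assoc]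
        congr 1
        rw [← ENNReal.tsum_mul_left]
        refine tsum_congr fun m => ?_
        have hm1 : (0 : ℝ) < (m : ℝ) + 1 := by positivity
        have h2 : ENNReal.ofReal (((m : ℝ) + 1) ^ (s + 1)) *
            ENNReal.ofReal (((m : ℝ) + 1) ^ (p + s)) =
            ENNReal.ofReal (((m : ℝ) + 1) ^ (p + (r - 1))) := by
          rw [← ENNReal.ofReal_mul (Real.rpow_nonneg hm1.le _), ← Real.rpow_add hm1, her]
        rw [ENNReal.ofReal_mul (by positivity : (0:ℝ) ≤ 2 / (s + 1)), ← h2]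
        ring

lemma rterm {p r : ℝ} (hp0 : 0 < p) (m : ℕ) (x : ℝ≥0∞) :
    (ENNReal.ofReal ((m : ℝ) + 1) * x) ^ p * ENNReal.ofReal (((m : ℝ) + 1) ^ (r - 1)) =
      ENNReal.ofReal (((m : ℝ) + 1) ^ (p + (r - 1))) * x ^ p := by
  have hm1 : (0 : ℝ) < (m : ℝ) + 1 := by positivity
  rw [ENNReal.mul_rpow_of_nonneg _ _ hp0.le, ENNReal.ofReal_rpow_of_pos hm1]
  have h2 : ENNReal.ofReal (((m : ℝ) + 1) ^ p) * ENNReal.ofReal (((m : ℝ) + 1) ^ (r - 1)) =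
      ENNReal.ofReal (((m : ℝ) + 1) ^ (p + (r - 1))) := by
    rw [← ENNReal.ofReal_mul (Real.rpow_nonneg hm1.le _), ← Real.rpow_add hm1]
  rw [← h2]
  ring

lemma key {p r : ℝ} (hp : 1 ≤ p) (hr : 0 < r) :
    ∃ K : ℝ, 0 < K ∧ ∀ V : ℕ → ℝ≥0∞,
      ∑' n : ℕ, (∑' j : ℕ, V (n + 1 + j)) ^ p * ENNReal.ofReal (((n : ℝ) + 1) ^ (r - 1)) ≤
        ENNReal.ofReal K *
          ∑' m : ℕ, (ENNReal.ofReal ((m : ℝ) + 1) * V m) ^ p *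
            ENNReal.ofReal (((m : ℝ) + 1) ^ (r - 1)) := by
  have hp0 : 0 < p := by linarith
  rcases eq_or_lt_of_le hp with hp1 | hp1
  · -- p = 1
    refine ⟨2 / r, by positivity, fun V => ?_⟩
    have hrr : 1 + (r - 1) = r := by ring
    have hR : ∀ m : ℕ, (ENNReal.ofReal ((m : ℝ) + 1) * V m) ^ p *
        ENNReal.ofReal (((m : ℝ) + 1) ^ (r - 1)) =
        ENNReal.ofReal (((m : ℝ) + 1) ^ r) * V m := by
      intro m
      rw [rterm hp0 m (V m), ← hp1, hrr, ENNReal.rpow_one]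
    calc ∑' n : ℕ, (∑' j : ℕ, V (n + 1 + j)) ^ p * ENNReal.ofReal (((n : ℝ) + 1) ^ (r - 1))
        = ∑' n : ℕ, ENNReal.ofReal (((n : ℝ) + 1) ^ (r - 1)) * ∑' j : ℕ, V (n + 1 + j) := by
          refine tsum_congr fun n => ?_
          rw [← hp1, ENNReal.rpow_one, mul_comm]
      _ = ∑' m : ℕ, (∑ k ∈ Finset.range m, ENNReal.ofReal (((k : ℝ) + 1) ^ (r - 1))) * V m :=
          swap_sum _ V
      _ ≤ ∑' m : ℕ, ENNReal.ofReal (2 / r * ((m : ℝ) + 1) ^ r) * V m := by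
          refine ENNReal.tsum_le_tsum fun m => mul_le_mul_left ?_ _
          calc (∑ k ∈ Finset.range m, ENNReal.ofReal (((k : ℝ) + 1) ^ (r - 1)))
              = ENNReal.ofReal (∑ k ∈ Finset.range m, ((k : ℝ) + 1) ^ (r - 1)) :=
                (ENNReal.ofReal_sum_of_nonneg fun k _ =>
                  Real.rpow_nonneg (by positivity) _).symm
            _ ≤ _ := by
                refine ENNReal.ofReal_le_ofReal ?_
                have h := front_sum (by linarith : (-1:ℝ) < r - 1) m
                have hr1 : r - 1 + 1 = r := by ring
                rw [hr1] at h
                exact h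
      _ = ENNReal.ofReal (2 / r) * ∑' m : ℕ, ENNReal.ofReal (((m : ℝ) + 1) ^ r) * V m := by
          rw [← ENNReal.tsum_mul_left]
          refine tsum_congr fun m => ?_
          rw [ENNReal.ofReal_mul (by positivity), mul_assoc]
      _ = ENNReal.ofReal (2 / r) *
            ∑' m : ℕ, (ENNReal.ofReal ((m : ℝ) + 1) * V m) ^ p *
              ENNReal.ofReal (((m : ℝ) + 1) ^ (r - 1)) := by
          congr 1
          exact (tsum_congr hR).symm
  · -- p > 1
    obtain ⟨s, hs⟩ : ∃ x : ℝ, x = r / 2 - 1 := ⟨_, rfl⟩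
    obtain ⟨q, hq⟩ : ∃ x : ℝ, x = p / (p - 1) := ⟨_, rfl⟩
    obtain ⟨t, ht⟩ : ∃ x : ℝ, x = (p + s) / p := ⟨_, rfl⟩
    obtain ⟨α, hα⟩ : ∃ x : ℝ, x = (p + s) / (p - 1) := ⟨_, rfl⟩
    have hp1' : 0 < p - 1 := by linarith
    have hs0 : 0 < s + 1 := by rw [hs]; linarith
    have hpq : p.HolderConjugate q := (Real.holderConjugate_iff_eq_conjExponent hp1).mpr hq
    have hα1 : 1 < α := by
      rw [hα, lt_div_iff₀ hp1']
      rw [hs]; linarith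
    have htq : t * q = α := by
      rw [ht, hq, hα]; field_simp; try ring
    have htp : t * p = p + s := by
      rw [ht]; field_simp
    have hes : (1 - α) * (p - 1) + (r - 1) = s := by
      rw [hα, hs]; field_simp; try ring
    have her : s + 1 + (p + s) = p + (r - 1) := by rw [hs]; ring
    have hα0 : 0 < α - 1 := by linarith
    have hK : 0 < (1 / (α - 1)) ^ (p - 1) * (2 / (s + 1)) :=
      mul_pos (Real.rpow_pos_of_pos (one_div_pos.mpr hα0) _) (div_pos two_pos hs0)
    refine ⟨(1 / (α - 1)) ^ (p - 1) * (2 / (s + 1)), hK, fun V => ?_⟩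
    calc ∑' n : ℕ, (∑' j : ℕ, V (n + 1 + j)) ^ p * ENNReal.ofReal (((n : ℝ) + 1) ^ (r - 1))
        ≤ ENNReal.ofReal ((1 / (α - 1)) ^ (p - 1) * (2 / (s + 1))) *
            ∑' m : ℕ, ENNReal.ofReal (((m : ℝ) + 1) ^ (p + (r - 1))) * V m ^ p :=
          key_core hp1 hpq hα1 hs0 htq htp hes her V
      _ = _ := by
          congr 1
          exact (tsum_congr fun m => rterm hp0 m (V m)).symm

end Stmt4Aux

theorem stmt4 (p r : ℝ) (hp : 1 ≤ p) (hr : 0 < r) :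
    ∃ C : ℝ, 0 < C ∧ ∀ a : ℕ → ℝ, (∀ n, 0 ≤ a n) →
      (∑' n : ℕ, (∑' j : ℕ, ENNReal.ofReal (a (n + 2 + j))) ^ p *
          ENNReal.ofReal (((n : ℝ) + 1) ^ (r - 1))) ^ (1/p)
        ≤ ENNReal.ofReal C *
          (∑' n : ℕ, ENNReal.ofReal (((n : ℝ) + 1) * a (n + 1)) ^ p *
            ENNReal.ofReal (((n : ℝ) + 1) ^ (r - 1))) ^ (1/p) := by
  obtain ⟨K, hK0, hkey⟩ := Stmt4Aux.key hp hr
  have hp0 : 0 < p := by linarith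
  refine ⟨K ^ (1 / p), Real.rpow_pos_of_pos hK0 _, fun a ha => ?_⟩
  set V : ℕ → ℝ≥0∞ := fun m => ENNReal.ofReal (a (m + 1)) with hV
  have hL : (∑' n : ℕ, (∑' j : ℕ, ENNReal.ofReal (a (n + 2 + j))) ^ p *
      ENNReal.ofReal (((n : ℝ) + 1) ^ (r - 1))) =
      ∑' n : ℕ, (∑' j : ℕ, V (n + 1 + j)) ^ p * ENNReal.ofReal (((n : ℝ) + 1) ^ (r - 1)) := by
    refine tsum_congr fun n => ?_
    have hEq : (∑' j : ℕ, ENNReal.ofReal (a (n + 2 + j))) = ∑' j : ℕ, V (n + 1 + j) := by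
      refine tsum_congr fun j => ?_
      simp only [hV]
      rw [show n + 2 + j = n + 1 + j + 1 from by omega]
    rw [hEq]
  have hR : (∑' n : ℕ, ENNReal.ofReal (((n : ℝ) + 1) * a (n + 1)) ^ p *
      ENNReal.ofReal (((n : ℝ) + 1) ^ (r - 1))) =
      ∑' m : ℕ, (ENNReal.ofReal ((m : ℝ) + 1) * V m) ^ p *
        ENNReal.ofReal (((m : ℝ) + 1) ^ (r - 1)) := by
    refine tsum_congr fun m => ?_
    rw [ENNReal.ofReal_mul (by positivity)]
  rw [hL, hR]
  refine le_trans (ENNReal.rpow_le_rpow (hkey V) (by positivity)) (le_of_eq ?_)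
  rw [ENNReal.mul_rpow_of_nonneg _ _ (by positivity : (0:ℝ) ≤ 1 / p),
    ENNReal.ofReal_rpow_of_pos hK0]
end

section
/- For every k ∈ ℕ₀ there exists a polynomial p_k of degree k with positive coefficients, with p_0 = 1 and p_k(0) = 0 for k ≥ 1, such that Σ_{n∈ℤ} n^{2k} I_n(t) = e^t p_k(t) for all t > 0. -/
noncomputable def besselI (n : ℤ) (t : ℝ) : ℝ :=
  ∑' m : ℕ, (1 / ((m.factorial : ℝ) * Real.Gamma ((m : ℝ) + n.natAbs + 1))) *
    (t / 2) ^ (2 * m + n.natAbs)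

noncomputable def discreteHeat (f : ℤ → ℝ) (t : ℝ) (n : ℤ) : ℝ :=
  ∑' j : ℤ, Real.exp (-2 * t) * besselI j (2 * t) * f (n - j)

/-!
Reindexing the Bessel series `I_n(t) = ∑ₘ x^(2m+|n|) / (m! (m+|n|)!)`, `x = t/2`, by
`(a, b) = (m + n⁺, m + n⁻)` turns `∑ₙ n^j I_n(t)` into
`M_j(x) = ∑_{a,b} (a - b)^j x^a/a! · x^b/b!`. Since `a · x^a/a! = x · x^(a-1)/(a-1)!`, a factor
`a - b` shifts the difference by `±1`, so `M_{j+1} = x ∑ ((a-b+1)^j - (a-b-1)^j) x^a/a! x^b/b!`;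
for odd `j` only even powers survive and `M_{2k+2} = 2x ∑_{l ≤ k} C(2k+1, 2l) M_{2l}`.
Hence `M_{2k}(t/2) = e^t P_k(t)` for `P_0 = 1`, `P_{k+1} = X ∑_{l ≤ k} C(2k+1, 2l) P_l`, a recursion
that visibly produces nonnegative coefficients and degree exactly `k`.
-/

open Finset Polynomial
open scoped Nat

noncomputable def momentPoly : ℕ → ℝ[X]
  | 0 => 1
  | k + 1 => X * ∑ l : Fin (k + 1), ((2 * k + 1).choose (2 * l) : ℝ) • momentPoly l

lemma momentPoly_succ (k : ℕ) : momentPoly (k + 1) =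
    X * ∑ l ∈ range (k + 1), ((2 * k + 1).choose (2 * l) : ℝ) • momentPoly l := by
  rw [momentPoly,
    Fin.sum_univ_eq_sum_range (fun l ↦ ((2 * k + 1).choose (2 * l) : ℝ) • momentPoly l)]

lemma momentPoly_coeff_succ (k i : ℕ) : (momentPoly (k + 1)).coeff (i + 1) =
    ∑ l ∈ range (k + 1), ((2 * k + 1).choose (2 * l) : ℝ) * (momentPoly l).coeff i := by
  simp [momentPoly_succ, coeff_X_mul]

lemma momentPoly_eval_succ (k : ℕ) (t : ℝ) : (momentPoly (k + 1)).eval t =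
    t * ∑ l ∈ range (k + 1), ((2 * k + 1).choose (2 * l) : ℝ) * (momentPoly l).eval t := by
  simp [momentPoly_succ, eval_finsetSum]

lemma momentPoly_coeff_nonneg (k i : ℕ) : 0 ≤ (momentPoly k).coeff i := by
  induction k using Nat.strong_induction_on generalizing i with
  | _ k ih =>
    rcases k, i with ⟨_ | k, _ | i⟩
    · simp [momentPoly]
    · simp [momentPoly, coeff_one]
    · simp [momentPoly_succ]
    · rw [momentPoly_coeff_succ]
      exact sum_nonneg fun l hl ↦ mul_nonneg (by positivity) (ih l (by simpa using hl) i)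

lemma momentPoly_natDegree_le (k : ℕ) : (momentPoly k).natDegree ≤ k := by
  induction k using Nat.strong_induction_on with
  | _ k ih =>
    rcases k with _ | k
    · simp [momentPoly]
    · rw [momentPoly_succ]
      refine natDegree_mul_le.trans ?_
      grw [natDegree_X, natDegree_sum_le_of_forall_le _ _ fun l hl ↦
        (natDegree_smul_le _ _).trans ((ih l (by simpa using hl)).trans (by simpa using hl))]
      omega

lemma momentPoly_coeff_self_pos (k : ℕ) : 0 < (momentPoly k).coeff k := by
  induction k with
  | zero => simp [momentPoly]
  | succ k ih =>
    rw [momentPoly_coeff_succ]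
    refine sum_pos' (fun l _ ↦ mul_nonneg (by positivity) (momentPoly_coeff_nonneg l k))
      ⟨k, self_mem_range_succ k, mul_pos ?_ ih⟩
    exact_mod_cast Nat.choose_pos (by omega)

lemma momentPoly_natDegree (k : ℕ) : (momentPoly k).natDegree = k :=
  natDegree_eq_of_le_of_coeff_ne_zero (momentPoly_natDegree_le k) (momentPoly_coeff_self_pos k).ne'

lemma sum_range_two_mul {M : Type*} [AddCommMonoid M] (f : ℕ → M) (n : ℕ) :
    ∑ i ∈ range (2 * n), f i = ∑ l ∈ range n, (f (2 * l) + f (2 * l + 1)) := by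
  induction n with
  | zero => simp
  | succ n ih => rw [mul_add_one, sum_range_succ, sum_range_succ, sum_range_succ, ih, add_assoc]

lemma add_one_pow_sub_sub_one_pow_odd {R : Type*} [CommRing R] (y : R) (k : ℕ) :
    (y + 1) ^ (2 * k + 1) - (y - 1) ^ (2 * k + 1) =
      2 * ∑ l ∈ range (k + 1), ((2 * k + 1).choose (2 * l) : R) * y ^ (2 * l) := by
  rw [add_pow, sub_eq_add_neg y, add_pow, ← sum_sub_distrib, add_assoc, ← mul_add_one,
    sum_range_two_mul, mul_sum]
  refine sum_congr rfl fun l hl ↦ ?_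
  obtain ⟨i, rfl⟩ := Nat.exists_eq_add_of_le (mem_range_succ_iff.mp hl)
  rw [show 2 * (l + i) + 1 - 2 * l = 2 * i + 1 by omega,
    show 2 * (l + i) + 1 - (2 * l + 1) = 2 * i by omega]
  simp only [one_pow, (even_two_mul i).neg_one_pow, (odd_two_mul_add_one i).neg_one_pow]
  ring

noncomputable def expWeight (x : ℝ) (p : ℕ × ℕ) : ℝ := x ^ p.1 / p.1 ! * (x ^ p.2 / p.2 !)

/-- `e^{2x}` times the `j`-th moment of the Skellam distribution, the law of `X - Y` for
independent Poisson(`x`) variables `X`, `Y`. -/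
noncomputable def skellamMoment (j : ℕ) (x : ℝ) : ℝ :=
  ∑' p : ℕ × ℕ, ((p.1 : ℝ) - p.2) ^ j * expWeight x p

lemma expWeight_swap (x : ℝ) (p : ℕ × ℕ) : expWeight x p.swap = expWeight x p :=
  mul_comm _ _

lemma hasSum_expWeight (x : ℝ) : HasSum (expWeight x) (Real.exp x * Real.exp x) := by
  have h : HasSum (fun n : ℕ ↦ x ^ n / n !) (Real.exp x) := by
    rw [Real.exp_eq_exp_ℝ]
    exact NormedSpace.expSeries_div_hasSum_exp x
  have hs := Real.summable_pow_div_factorial x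
  exact h.mul h (hs.norm.mul_norm hs.norm).of_norm

lemma skellamMoment_zero (x : ℝ) : skellamMoment 0 x = Real.exp x * Real.exp x := by
  simpa [skellamMoment] using (hasSum_expWeight x).tsum_eq

lemma summable_mul_expWeight {g : ℕ × ℕ → ℝ} {m : ℕ}
    (hg : ∀ p, |g p| ≤ ((p.1 + p.2 + 1 : ℕ) : ℝ) ^ m) (x : ℝ) :
    Summable fun p ↦ g p * expWeight x p := by
  set y := 2 ^ m * |x|
  refine .of_norm_bounded ((Real.summable_pow_div_factorial y).mul_of_nonneg
    (Real.summable_pow_div_factorial y) (fun _ ↦ by positivity) (fun _ ↦ by positivity)) fun p ↦ ?_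
  have hpow : ((p.1 + p.2 + 1 : ℕ) : ℝ) ≤ 2 ^ (p.1 + p.2) := by
    exact_mod_cast Nat.lt_two_pow_self
  calc ‖g p * expWeight x p‖ = |g p| * (|x| ^ p.1 / p.1 ! * (|x| ^ p.2 / p.2 !)) := by
        simp [expWeight]
    _ ≤ (2 ^ (p.1 + p.2)) ^ m * (|x| ^ p.1 / p.1 ! * (|x| ^ p.2 / p.2 !)) := by
        gcongr
        exact (hg p).trans (by gcongr)
    _ = y ^ p.1 / p.1 ! * (y ^ p.2 / p.2 !) := by
        simp only [y, mul_pow, ← pow_mul, pow_add]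
        ring

lemma abs_natCast_sub_add_le (a b : ℕ) {d : ℝ} (hd : |d| ≤ 1) :
    |(a : ℝ) - b + d| ≤ a + b + 1 := by
  have := abs_le.mp hd
  rw [abs_le]
  constructor <;> linarith [a.cast_nonneg (α := ℝ), b.cast_nonneg (α := ℝ)]

lemma summable_sub_add_pow_mul_expWeight (j : ℕ) {d : ℝ} (hd : |d| ≤ 1) (x : ℝ) :
    Summable fun p : ℕ × ℕ ↦ ((p.1 : ℝ) - p.2 + d) ^ j * expWeight x p :=
  summable_mul_expWeight (fun p ↦ by
    rw [abs_pow]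
    push_cast
    gcongr
    exact abs_natCast_sub_add_le p.1 p.2 hd) x

lemma summable_sub_pow_mul_expWeight (j : ℕ) (x : ℝ) :
    Summable fun p : ℕ × ℕ ↦ ((p.1 : ℝ) - p.2) ^ j * expWeight x p := by
  simpa using summable_sub_add_pow_mul_expWeight j (d := 0) (by simp) x

lemma natCast_succ_mul_expWeight (x : ℝ) (a b : ℕ) :
    ((a + 1 : ℕ) : ℝ) * expWeight x (a + 1, b) = x * expWeight x (a, b) := by
  simp only [expWeight, Nat.factorial_succ, pow_succ]
  push_cast
  field_simp

lemma tsum_fst_mul_expWeight (f : ℕ × ℕ → ℝ) (x : ℝ) :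
    ∑' p : ℕ × ℕ, (p.1 : ℝ) * f p * expWeight x p =
      x * ∑' p : ℕ × ℕ, f (p.1 + 1, p.2) * expWeight x p := by
  have hsupp : (Function.support fun p : ℕ × ℕ ↦ (p.1 : ℝ) * f p * expWeight x p) ⊆
      Set.range fun p : ℕ × ℕ ↦ (p.1 + 1, p.2) := by
    rintro ⟨_ | a, b⟩ hp
    · simp at hp
    · exact ⟨(a, b), rfl⟩
  have hinj : Function.Injective fun p : ℕ × ℕ ↦ (p.1 + 1, p.2) := fun p q h ↦ by
    simpa [Prod.ext_iff] using h
  rw [← hinj.tsum_eq hsupp, ← tsum_mul_left]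
  refine tsum_congr fun ⟨a, b⟩ ↦ ?_
  rw [mul_right_comm, natCast_succ_mul_expWeight]
  ring

lemma tsum_snd_mul_expWeight (f : ℕ × ℕ → ℝ) (x : ℝ) :
    ∑' p : ℕ × ℕ, (p.2 : ℝ) * f p * expWeight x p =
      x * ∑' p : ℕ × ℕ, f (p.1, p.2 + 1) * expWeight x p := by
  have hswap (g : ℕ × ℕ → ℝ) : ∑' p, g p = ∑' p : ℕ × ℕ, g p.swap :=
    ((Equiv.prodComm ℕ ℕ).tsum_eq g).symm
  rw [hswap, hswap fun p ↦ f (p.1, p.2 + 1) * expWeight x p]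
  simpa [expWeight_swap] using tsum_fst_mul_expWeight (f ∘ Prod.swap) x

lemma skellamMoment_succ (j : ℕ) (x : ℝ) : skellamMoment (j + 1) x =
    x * ∑' p : ℕ × ℕ, (((p.1 : ℝ) - p.2 + 1) ^ j - ((p.1 : ℝ) - p.2 - 1) ^ j) * expWeight x p := by
  have hmul {c : ℕ × ℕ → ℕ} (hc : ∀ p, c p ≤ p.1 + p.2) :
      Summable fun p : ℕ × ℕ ↦ (c p : ℝ) * ((p.1 : ℝ) - p.2) ^ j * expWeight x p := by
    refine summable_mul_expWeight (m := j + 1) (fun p ↦ ?_) x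
    have hsub := abs_natCast_sub_add_le p.1 p.2 (d := 0) (by simp)
    have hcp : (c p : ℝ) ≤ p.1 + p.2 := by exact_mod_cast hc p
    rw [add_zero] at hsub
    rw [abs_mul, abs_pow, Nat.abs_cast, pow_succ']
    push_cast
    gcongr
    linarith
  have hshift (d : ℝ) (hd : |d| ≤ 1) := summable_sub_add_pow_mul_expWeight j hd x
  simp only [sub_eq_add_neg _ (1 : ℝ)]
  calc skellamMoment (j + 1) x
      = ∑' p : ℕ × ℕ, ((p.1 : ℝ) * ((p.1 : ℝ) - p.2) ^ j * expWeight x p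
          - (p.2 : ℝ) * ((p.1 : ℝ) - p.2) ^ j * expWeight x p) :=
        tsum_congr fun p ↦ by ring
    _ = x * ∑' p : ℕ × ℕ, ((p.1 : ℝ) - p.2 + 1) ^ j * expWeight x p
          - x * ∑' p : ℕ × ℕ, ((p.1 : ℝ) - p.2 + -1) ^ j * expWeight x p := by
        rw [(hmul fun p ↦ Nat.le_add_right _ _).tsum_sub (hmul fun p ↦ Nat.le_add_left _ _),
          tsum_fst_mul_expWeight, tsum_snd_mul_expWeight]
        push_cast
        ring_nf
    _ = _ := by
        rw [← mul_sub, ← (hshift 1 (by simp)).tsum_sub (hshift (-1) (by simp))]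
        simp only [sub_mul]

lemma skellamMoment_two_mul_add_two (k : ℕ) (x : ℝ) : skellamMoment (2 * k + 2) x =
    2 * x * ∑ l ∈ range (k + 1), ((2 * k + 1).choose (2 * l) : ℝ) * skellamMoment (2 * l) x := by
  rw [skellamMoment_succ (2 * k + 1)]
  simp_rw [add_one_pow_sub_sub_one_pow_odd, mul_assoc, sum_mul, mul_sum, mul_assoc]
  rw [Summable.tsum_finsetSum fun l _ ↦
    ((summable_sub_pow_mul_expWeight (2 * l) x).mul_left _).mul_left _]
  simp_rw [tsum_mul_left, skellamMoment, mul_sum]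
  exact sum_congr rfl fun _ _ ↦ by ring

lemma skellamMoment_two_mul (k : ℕ) (t : ℝ) :
    skellamMoment (2 * k) (t / 2) = Real.exp t * (momentPoly k).eval t := by
  induction k using Nat.strong_induction_on with
  | _ k ih =>
    rcases k with _ | k
    · simp [skellamMoment_zero, momentPoly, ← Real.exp_add]
    · rw [mul_add_one, skellamMoment_two_mul_add_two, momentPoly_eval_succ, mul_sum, mul_sum,
        mul_sum]
      refine sum_congr rfl fun l hl ↦ ?_
      rw [ih l (by simpa using hl)]
      ring

def diffMinEquiv : ℕ × ℕ ≃ ℤ × ℕ where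
  toFun p := ((p.1 : ℤ) - p.2, min p.1 p.2)
  invFun q := (q.2 + q.1.toNat, q.2 + (-q.1).toNat)
  left_inv := by rintro ⟨a, b⟩; simp only [Prod.mk.injEq]; omega
  right_inv := by rintro ⟨n, m⟩; simp only [Prod.mk.injEq]; omega

lemma natCast_sub_diffMinEquiv_symm (q : ℤ × ℕ) :
    ((diffMinEquiv.symm q).1 : ℝ) - (diffMinEquiv.symm q).2 = q.1 := by
  have h : ((diffMinEquiv.symm q).1 : ℤ) - (diffMinEquiv.symm q).2 = q.1 :=
    congrArg Prod.fst (diffMinEquiv.apply_symm_apply q)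
  exact_mod_cast h

lemma expWeight_diffMinEquiv_symm (x : ℝ) (n : ℤ) (m : ℕ) :
    expWeight x (diffMinEquiv.symm (n, m)) =
      1 / (m ! * Real.Gamma (m + n.natAbs + 1)) * x ^ (2 * m + n.natAbs) := by
  rw [show (m : ℝ) + n.natAbs + 1 = (m + n.natAbs : ℕ) + 1 by push_cast; rfl,
    Real.Gamma_nat_eq_factorial]
  have hpos : expWeight x (m + n.natAbs, m) =
      1 / (m ! * (m + n.natAbs)! : ℝ) * x ^ (2 * m + n.natAbs) := by
    have := m.factorial_pos
    have := (m + n.natAbs).factorial_pos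
    rw [expWeight]
    field_simp
    ring
  rcases le_total 0 n with hn | hn
  · rw [show diffMinEquiv.symm (n, m) = (m + n.natAbs, m) by simp [diffMinEquiv]; omega, hpos]
  · rw [show diffMinEquiv.symm (n, m) = (m + n.natAbs, m).swap by simp [diffMinEquiv]; omega,
      expWeight_swap, hpos]

lemma hasSum_expWeight_diffMinEquiv_symm (n : ℤ) (t : ℝ) :
    HasSum (fun m ↦ expWeight (t / 2) (diffMinEquiv.symm (n, m))) (besselI n t) := by
  have hs : Summable fun m ↦ expWeight (t / 2) (diffMinEquiv.symm (n, m)) :=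
    (diffMinEquiv.symm.summable_iff.mpr (hasSum_expWeight (t / 2)).summable).prod_factor n
  simpa [besselI, expWeight_diffMinEquiv_symm] using hs.hasSum

lemma hasSum_pow_mul_besselI (j : ℕ) (t : ℝ) :
    HasSum (fun n : ℤ ↦ (n : ℝ) ^ j * besselI n t) (skellamMoment j (t / 2)) := by
  have h := (summable_sub_pow_mul_expWeight j (t / 2)).hasSum
  refine (diffMinEquiv.symm.hasSum_iff.mpr h).prod_fiberwise fun n ↦ ?_
  simpa [natCast_sub_diffMinEquiv_symm] using
    (hasSum_expWeight_diffMinEquiv_symm n t).mul_left ((n : ℝ) ^ j)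

theorem stmt7 (k : ℕ) :
    ∃ P : Polynomial ℝ, P.natDegree = k ∧ (∀ i ∈ P.support, 0 < P.coeff i) ∧
      (k = 0 → P = 1) ∧ (k ≠ 0 → P.eval 0 = 0) ∧
      ∀ t : ℝ, 0 < t →
        HasSum (fun n : ℤ => (n : ℝ) ^ (2 * k) * besselI n t) (Real.exp t * P.eval t) := by
  refine ⟨momentPoly k, momentPoly_natDegree k,
    fun i hi ↦ (momentPoly_coeff_nonneg k i).lt_of_ne' (mem_support_iff.mp hi), ?_, ?_,
    fun t _ ↦ skellamMoment_two_mul k t ▸ hasSum_pow_mul_besselI (2 * k) t⟩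
  · rintro rfl
    rw [momentPoly]
  · intro hk
    obtain ⟨k, rfl⟩ := Nat.exists_eq_succ_of_ne_zero hk
    simp [momentPoly_succ]
end

section
/- Let 0 < α < 1, 1 ≤ q < ∞, and let f: ℤ → ℝ satisfy Σ_{j≠0} ( sup_{n∈ℤ} |f(n+j) - f(n)| / |j|^α )^q / |j| < ∞ (with the ℓ^∞ norm in n). Then Σ_{n∈ℤ} ( |f(n)|/(1+|n|^α) )^q / (1+|n|) < ∞. -/
section

open scoped ENNReal

lemma my_rpow_add_le_add_rpow {a b : ℝ} (p : ℝ) (ha : 0 ≤ a) (hb : 0 ≤ b)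
    (hp : 0 ≤ p) (hp1 : p ≤ 1) : (a + b) ^ p ≤ a ^ p + b ^ p := by
  have h := NNReal.rpow_add_le_add_rpow a.toNNReal b.toNNReal hp hp1
  have := NNReal.coe_le_coe.2 h
  rw [NNReal.coe_add, NNReal.coe_rpow, NNReal.coe_rpow, NNReal.coe_rpow, NNReal.coe_add,
    Real.coe_toNNReal _ ha, Real.coe_toNNReal _ hb] at this
  exact this

lemma my_pointwise (α q : ℝ) (hα0 : 0 < α) (hα1 : α < 1) (hq : 1 ≤ q) (f : ℤ → ℝ) (n : ℤ) :
    ENNReal.ofReal ((|f n| / (1 + |(n : ℝ)| ^ α)) ^ q / (1 + |(n : ℝ)|)) ≤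
      (2:ℝ≥0∞) ^ (q-1) *
        (ENNReal.ofReal (|f 0| ^ q / (1 + |(n : ℝ)|) ^ (α*q+1)) +
         Set.indicator {j : ℤ | j ≠ 0}
           (fun j => (⨆ m : ℤ, ENNReal.ofReal (|f (m + j) - f m| / |((j : ℤ) : ℝ)| ^ α)) ^ q /
             ENNReal.ofReal |((j : ℤ) : ℝ)|) n) := by
  have hq0 : (0:ℝ) ≤ q := by linarith
  have h2 : (1:ℝ≥0∞) ≤ (2:ℝ≥0∞) ^ (q-1) := by
    calc (1:ℝ≥0∞) = (2:ℝ≥0∞) ^ (0:ℝ) := by rw [ENNReal.rpow_zero]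
    _ ≤ (2:ℝ≥0∞) ^ (q-1) := ENNReal.rpow_le_rpow_of_exponent_le one_le_two (by linarith)
  rcases eq_or_ne n 0 with rfl | hn
  · rw [Set.indicator_of_notMem (by simp)]
    simp only [Int.cast_zero, abs_zero, Real.zero_rpow hα0.ne', add_zero, div_one,
      Real.one_rpow, add_zero]
    calc ENNReal.ofReal (|f 0| ^ q) = 1 * ENNReal.ofReal (|f 0| ^ q) := (one_mul _).symm
    _ ≤ (2:ℝ≥0∞) ^ (q-1) * ENNReal.ofReal (|f 0| ^ q) := mul_le_mul_left h2 _
  · set N : ℝ := |(n : ℝ)| with hN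
    have hN1 : (1:ℝ) ≤ N := by
      rw [hN, ← Int.cast_abs]
      exact_mod_cast Int.one_le_abs (by exact_mod_cast hn)
    have hN0 : (0:ℝ) < N := by linarith
    have hNα : (0:ℝ) < N ^ α := Real.rpow_pos_of_pos hN0 α
    have hD : (0:ℝ) < 1 + N := by linarith
    have hDα : (0:ℝ) < 1 + N ^ α := by linarith
    set a : ℝ := |f 0| / (1 + N) ^ α with ha
    set b : ℝ := |f n - f 0| / N ^ α with hb
    have ha0 : 0 ≤ a := by positivity
    have hb0 : 0 ≤ b := by positivity
    have hstep : |f n| / (1 + N ^ α) ≤ a + b := by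
      have hsub : (1 + N) ^ α ≤ 1 + N ^ α := by
        have h := my_rpow_add_le_add_rpow (a := 1) (b := N) α zero_le_one hN0.le hα0.le hα1.le
        rwa [Real.one_rpow] at h
      have htri : |f n| ≤ |f 0| + |f n - f 0| := by
        have := abs_add_le (f 0) (f n - f 0)
        simpa using this
      have h1 : |f 0| / (1 + N ^ α) ≤ a :=
        div_le_div_of_nonneg_left (abs_nonneg _) (Real.rpow_pos_of_pos hD α) hsub
      have h2' : |f n - f 0| / (1 + N ^ α) ≤ b :=
        div_le_div_of_nonneg_left (abs_nonneg _) hNα (by linarith)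
      calc |f n| / (1 + N ^ α) ≤ (|f 0| + |f n - f 0|) / (1 + N ^ α) := by gcongr
      _ = |f 0| / (1 + N ^ α) + |f n - f 0| / (1 + N ^ α) := add_div _ _ _
      _ ≤ a + b := add_le_add h1 h2'
    have hX0 : (0:ℝ) ≤ |f n| / (1 + N ^ α) := by positivity
    rw [ENNReal.ofReal_div_of_pos hD, ← ENNReal.ofReal_rpow_of_nonneg hX0 hq0]
    have hofX : ENNReal.ofReal (|f n| / (1 + N ^ α)) ≤ ENNReal.ofReal a + ENNReal.ofReal b := by
      rw [← ENNReal.ofReal_add ha0 hb0]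
      exact ENNReal.ofReal_le_ofReal hstep
    have hsplit : (ENNReal.ofReal (|f n| / (1 + N ^ α))) ^ q ≤
        (2:ℝ≥0∞) ^ (q-1) * ((ENNReal.ofReal a) ^ q + (ENNReal.ofReal b) ^ q) := by
      calc (ENNReal.ofReal (|f n| / (1 + N ^ α))) ^ q
          ≤ (ENNReal.ofReal a + ENNReal.ofReal b) ^ q := ENNReal.rpow_le_rpow hofX hq0
      _ ≤ (2:ℝ≥0∞) ^ (q-1) * ((ENNReal.ofReal a) ^ q + (ENNReal.ofReal b) ^ q) :=
          ENNReal.rpow_add_le_mul_rpow_add_rpow _ _ hq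
    have hT1 : (ENNReal.ofReal a) ^ q / ENNReal.ofReal (1 + N) =
        ENNReal.ofReal (|f 0| ^ q / (1 + N) ^ (α*q+1)) := by
      rw [ENNReal.ofReal_rpow_of_nonneg ha0 hq0, ← ENNReal.ofReal_div_of_pos hD]
      congr 1
      rw [ha, Real.div_rpow (abs_nonneg _) (Real.rpow_nonneg hD.le α), ← Real.rpow_mul hD.le,
        div_div, ← Real.rpow_add_one hD.ne']
    have hT2 : (ENNReal.ofReal b) ^ q / ENNReal.ofReal (1 + N) ≤
        Set.indicator {j : ℤ | j ≠ 0}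
          (fun j => (⨆ m : ℤ, ENNReal.ofReal (|f (m + j) - f m| / |((j : ℤ) : ℝ)| ^ α)) ^ q /
            ENNReal.ofReal |((j : ℤ) : ℝ)|) n := by
      rw [Set.indicator_of_mem (by exact hn : n ∈ {j : ℤ | j ≠ 0})]
      refine ENNReal.div_le_div ?_ (ENNReal.ofReal_le_ofReal (by linarith))
      refine ENNReal.rpow_le_rpow ?_ hq0
      have h := le_iSup (fun m : ℤ => ENNReal.ofReal (|f (m + n) - f m| / |(n:ℝ)| ^ α)) 0
      simpa [hb, hN] using h
    calc (ENNReal.ofReal (|f n| / (1 + N ^ α))) ^ q / ENNReal.ofReal (1 + N)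
        ≤ (2:ℝ≥0∞) ^ (q-1) * ((ENNReal.ofReal a) ^ q + (ENNReal.ofReal b) ^ q) /
          ENNReal.ofReal (1 + N) := ENNReal.div_le_div hsplit le_rfl
    _ = (2:ℝ≥0∞) ^ (q-1) * ((ENNReal.ofReal a) ^ q / ENNReal.ofReal (1 + N) +
          (ENNReal.ofReal b) ^ q / ENNReal.ofReal (1 + N)) := by
        rw [mul_div_assoc, ENNReal.add_div]
    _ ≤ _ := by
        rw [hT1]
        exact mul_le_mul_right (add_le_add le_rfl hT2) _

lemma my_summable (p : ℝ) (hp : 1 < p) :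
    Summable (fun n : ℤ => 1 / (1 + |(n : ℝ)|) ^ p) := by
  have hcomp := (Real.summable_one_div_int_add_rpow (1/2) p).2 hp
  refine Summable.of_nonneg_of_le (fun n => by positivity) (fun n => ?_) hcomp
  have h1 : (0:ℝ) < |(n : ℝ) + 1/2| := by
    have h : ((n:ℝ) + 1/2) ≠ 0 := by
      intro h
      have h2 : ((2*n : ℤ) : ℝ) = ((-1 : ℤ) : ℝ) := by push_cast; linarith
      have := Int.cast_injective (α := ℝ) h2
      omega
    exact abs_pos.mpr h
  have h2 : |(n : ℝ) + 1/2| ≤ 1 + |(n : ℝ)| := by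
    calc |(n : ℝ) + 1/2| ≤ |(n:ℝ)| + |(1/2 : ℝ)| := abs_add_le _ _
    _ ≤ 1 + |(n:ℝ)| := by
      have : |(1/2 : ℝ)| = 1/2 := by norm_num
      linarith
  gcongr

theorem stmt11 (α q : ℝ) (hα0 : 0 < α) (hα1 : α < 1) (hq : 1 ≤ q) (f : ℤ → ℝ)
    (hf : ∑' j : {j : ℤ // j ≠ 0},
        (⨆ n : ℤ, ENNReal.ofReal (|f (n + (j : ℤ)) - f n| / |((j : ℤ) : ℝ)| ^ α)) ^ q /
          ENNReal.ofReal |((j : ℤ) : ℝ)| < ⊤) :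
    ∑' n : ℤ, ENNReal.ofReal ((|f n| / (1 + |(n : ℝ)| ^ α)) ^ q / (1 + |(n : ℝ)|)) < ⊤ := by
  set T : ℤ → ℝ≥0∞ := fun j =>
    (⨆ m : ℤ, ENNReal.ofReal (|f (m + j) - f m| / |((j : ℤ) : ℝ)| ^ α)) ^ q /
      ENNReal.ofReal |((j : ℤ) : ℝ)| with hTdef
  have hsum2 : ∑' n : ℤ, Set.indicator {j : ℤ | j ≠ 0} T n < ⊤ := by
    rw [← tsum_subtype {j : ℤ | j ≠ 0} T]
    exact hf
  have hsum1 : ∑' n : ℤ, ENNReal.ofReal (|f 0| ^ q / (1 + |(n : ℝ)|) ^ (α*q+1)) < ⊤ := by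
    have hp : 1 < α * q + 1 := by nlinarith
    have hsumR : Summable (fun n : ℤ => |f 0| ^ q / (1 + |(n : ℝ)|) ^ (α*q+1)) := by
      refine ((my_summable (α*q+1) hp).mul_left (|f 0| ^ q)).congr (fun n => ?_)
      rw [mul_one_div]
    rw [← ENNReal.ofReal_tsum_of_nonneg (fun n => by positivity) hsumR]
    exact ENNReal.ofReal_lt_top
  calc ∑' n : ℤ, ENNReal.ofReal ((|f n| / (1 + |(n : ℝ)| ^ α)) ^ q / (1 + |(n : ℝ)|))
      ≤ ∑' n : ℤ, (2:ℝ≥0∞) ^ (q-1) *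
        (ENNReal.ofReal (|f 0| ^ q / (1 + |(n : ℝ)|) ^ (α*q+1)) +
          Set.indicator {j : ℤ | j ≠ 0} T n) :=
      ENNReal.tsum_le_tsum (fun n => my_pointwise α q hα0 hα1 hq f n)
  _ = (2:ℝ≥0∞) ^ (q-1) *
        ((∑' n : ℤ, ENNReal.ofReal (|f 0| ^ q / (1 + |(n : ℝ)|) ^ (α*q+1))) +
          ∑' n : ℤ, Set.indicator {j : ℤ | j ≠ 0} T n) := by
      rw [ENNReal.tsum_mul_left, ENNReal.tsum_add]
  _ < ⊤ := by
      refine ENNReal.mul_lt_top ?_ ?_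
      · exact ENNReal.rpow_lt_top_of_nonneg (by linarith) (by simp)
      · exact ENNReal.add_lt_top.mpr ⟨hsum1, hsum2⟩

end
end

section
/- Let 1 < α < 2, 1 ≤ q < ∞, δ f(n) := f(n) - f(n+1), and suppose f: ℤ → ℝ satisfies Σ_{j≠0} ( sup_{n∈ℤ} |δf(n+j) - δf(n)| / |j|^{α-1} )^q / |j| < ∞. Then Σ_{n∈ℤ} ( |f(n)|/(1+|n|^α) )^q / (1+|n|) < ∞. -/
open Finset Filter Real

/-!
Write `δf` for the right difference and `s_j` for the supremum at lag `j`, so that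
`Σ_{j ≠ 0} s_j^q / |j| < ∞`. Comparing `δf(k)` with `δf(-1)` (lag `k + 1`) for `k ≥ 0`, and
`δf(-(k+1))` with `δf(0)`, the increments of `f` along `ℕ` and along `-ℕ` deviate from a constant
by at most `c_k (k+1)^{α-1}` with `Σ_k c_k^q / (k+1) < ∞`. Summing them,
`|f n| ≤ C n + n^{α-1} Σ_{k<n} c_k` for `n ≥ 1`, so `|f n| / n^α ≤ C n^{1-α} + (Σ_{k<n} c_k) / n`.
The first term is harmless since `(α - 1) q > 0`; the Cesàro means are handled by the discrete
Hardy inequality `Σ_n ((Σ_{k<n} c_k)/n)^q / n ≲ Σ_k c_k^q / (k+1)`, which follows from Jensen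
and `Σ_{n>k} n⁻² ≤ 2/(k+1)`.
-/

def rightDiff (f : ℤ → ℝ) (n : ℤ) : ℝ := f n - f (n + 1)

noncomputable def supDiffQuot (d : ℤ → ℝ) (β : ℝ) (j : ℤ) : ENNReal :=
  ⨆ n : ℤ, ENNReal.ofReal (|d (n + j) - d n| / |(j : ℝ)| ^ β)

theorem Real.rpow_add_le_mul_rpow_add_rpow {x y p : ℝ} (hx : 0 ≤ x) (hy : 0 ≤ y)
    (hp : 1 ≤ p) : (x + y) ^ p ≤ 2 ^ (p - 1) * (x ^ p + y ^ p) := by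
  exact_mod_cast NNReal.rpow_add_le_mul_rpow_add_rpow ⟨x, hx⟩ ⟨y, hy⟩ hp

theorem summable_sum_range_div_sq {u : ℕ → ℝ} (hu : ∀ k, 0 ≤ u k)
    (h : Summable fun k : ℕ => u k / (k + 1)) :
    Summable fun n : ℕ => (∑ k ∈ range n, u k) / (n : ℝ) ^ 2 := by
  refine summable_of_sum_range_le (c := 2 * ∑' k, u k / (k + 1))
    (fun n => div_nonneg (sum_nonneg fun k _ => hu k) (sq_nonneg _)) fun N => ?_
  calc ∑ n ∈ range N, (∑ k ∈ range n, u k) / (n : ℝ) ^ 2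
      = ∑ k ∈ range N, u k * ∑ n ∈ Ioo k N, ((n : ℝ) ^ 2)⁻¹ := by
        simp_rw [sum_div, mul_sum, div_eq_mul_inv]
        exact sum_comm' fun n k => by simp only [mem_range, mem_Ioo]; omega
    _ ≤ ∑ k ∈ range N, 2 * (u k / (k + 1)) := sum_le_sum fun k _ => by
        rw [mul_div_left_comm]
        exact mul_le_mul_of_nonneg_left (sum_Ioo_inv_sq_le k N) (hu k)
    _ ≤ 2 * ∑' k, u k / (k + 1) := by
        rw [← mul_sum]
        gcongr
        exact h.sum_le_tsum _ fun k _ => by have := hu k; positivity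

theorem summable_rpow_average_div {q : ℝ} {c : ℕ → ℝ} (hq : 1 ≤ q) (hc : ∀ k, 0 ≤ c k)
    (h : Summable fun k : ℕ => c k ^ q / (k + 1)) :
    Summable fun n : ℕ => ((∑ k ∈ range n, c k) / n) ^ q / n := by
  refine (summable_sum_range_div_sq (fun k => rpow_nonneg (hc k) q) h).of_nonneg_of_le
    (fun n => by have := sum_nonneg fun k (_ : k ∈ range n) => hc k; positivity) fun n => ?_
  rcases n.eq_zero_or_pos with rfl | hn
  · simp
  have hJensen : ((∑ k ∈ range n, c k) / n) ^ q ≤ (∑ k ∈ range n, c k ^ q) / n := by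
    have := rpow_arith_mean_le_arith_mean_rpow (range n) (fun _ => (n : ℝ)⁻¹) c
      (fun _ _ => by positivity) (by simp [hn.ne']) (fun k _ => hc k) hq
    rwa [← mul_sum, ← mul_sum, inv_mul_eq_div, inv_mul_eq_div] at this
  calc ((∑ k ∈ range n, c k) / n) ^ q / n ≤ (∑ k ∈ range n, c k ^ q) / n / n := by gcongr
    _ = _ := by rw [div_div, sq]

section OneSided

variable {α q b : ℝ} {g c : ℕ → ℝ}

theorem abs_le_of_abs_sub_sub_le (hα : 1 ≤ α) (hc : ∀ k, 0 ≤ c k)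
    (hg : ∀ k : ℕ, |g (k + 1) - g k - b| ≤ c k * ((k : ℝ) + 1) ^ (α - 1)) (n : ℕ) :
    |g n| ≤ |g 0| + n * |b| + (n : ℝ) ^ (α - 1) * ∑ k ∈ range n, c k := by
  have hstep : ∀ k ∈ range n, |g (k + 1) - g k| ≤ |b| + (n : ℝ) ^ (α - 1) * c k := by
    intro k hk
    have hkn : (k : ℝ) + 1 ≤ n := by exact_mod_cast mem_range.mp hk
    calc |g (k + 1) - g k| ≤ |g (k + 1) - g k - b| + |b| := by
          linarith [abs_sub_abs_le_abs_sub (g (k + 1) - g k) b]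
      _ ≤ c k * ((k : ℝ) + 1) ^ (α - 1) + |b| := by gcongr; exact hg k
      _ ≤ |b| + (n : ℝ) ^ (α - 1) * c k := by
        rw [add_comm, mul_comm]
        have := hc k
        gcongr
  calc |g n| ≤ |g 0| + |g n - g 0| := by linarith [abs_sub_abs_le_abs_sub (g n) (g 0)]
    _ = |g 0| + |∑ k ∈ range n, (g (k + 1) - g k)| := by rw [sum_range_sub]
    _ ≤ |g 0| + ∑ k ∈ range n, (|b| + (n : ℝ) ^ (α - 1) * c k) := by
        gcongr
        exact (abs_sum_le_sum_abs _ _).trans (sum_le_sum hstep)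
    _ = _ := by rw [sum_add_distrib, sum_const, card_range, nsmul_eq_mul, mul_sum, add_assoc]

theorem weighted_rpow_le_of_abs_sub_sub_le (hα : 1 < α) (hq : 1 ≤ q) (hc : ∀ k, 0 ≤ c k)
    (hg : ∀ k : ℕ, |g (k + 1) - g k - b| ≤ c k * ((k : ℝ) + 1) ^ (α - 1)) {n : ℕ} (hn : 1 ≤ n) :
    (|g n| / (1 + (n : ℝ) ^ α)) ^ q / (1 + n) ≤
      2 ^ (q - 1) * ((|g 0| + |b|) ^ q * (n : ℝ) ^ ((1 - α) * q - 1) +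
        ((∑ k ∈ range n, c k) / n) ^ q / n) := by
  set A := |g 0| + |b|
  set T := ∑ k ∈ range n, c k
  have hn1 : (1 : ℝ) ≤ n := by exact_mod_cast hn
  have hn0 : (0 : ℝ) < n := by linarith
  have hA : 0 ≤ A := by positivity
  have hT : 0 ≤ T := sum_nonneg fun k _ => hc k
  have hsplit : |g n| / (1 + (n : ℝ) ^ α) ≤ A * (n : ℝ) ^ (1 - α) + T / n := by
    have h := abs_le_of_abs_sub_sub_le hα.le hc hg n
    calc |g n| / (1 + (n : ℝ) ^ α) ≤ |g n| / (n : ℝ) ^ α := by gcongr; linarith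
      _ ≤ (A * n + (n : ℝ) ^ (α - 1) * T) / (n : ℝ) ^ α := by
        gcongr
        nlinarith [abs_nonneg (g 0), abs_nonneg b]
      _ = A * (n : ℝ) ^ (1 - α) + T / n := by
        rw [rpow_sub hn0, rpow_sub hn0, rpow_one]
        field_simp
  calc (|g n| / (1 + (n : ℝ) ^ α)) ^ q / (1 + n)
      ≤ (A * (n : ℝ) ^ (1 - α) + T / n) ^ q / n := by
        gcongr
        linarith
    _ ≤ 2 ^ (q - 1) * ((A * (n : ℝ) ^ (1 - α)) ^ q + (T / n) ^ q) / n := by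
        gcongr
        exact rpow_add_le_mul_rpow_add_rpow (by positivity) (by positivity) hq
    _ = _ := by
        rw [mul_rpow hA (by positivity), ← rpow_mul hn0.le, rpow_sub_one hn0.ne']
        ring

theorem summable_weighted_rpow_of_abs_sub_sub_le (hα : 1 < α) (hq : 1 ≤ q) (hc : ∀ k, 0 ≤ c k)
    (hcq : Summable fun k : ℕ => c k ^ q / (k + 1))
    (hg : ∀ k : ℕ, |g (k + 1) - g k - b| ≤ c k * ((k : ℝ) + 1) ^ (α - 1)) :
    Summable fun n : ℕ => (|g n| / (1 + (n : ℝ) ^ α)) ^ q / (1 + n) := by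
  have hp : Summable fun n : ℕ => (n : ℝ) ^ ((1 - α) * q - 1) :=
    summable_nat_rpow.mpr (by nlinarith)
  refine (((hp.mul_left ((|g 0| + |b|) ^ q)).add (summable_rpow_average_div hq hc hcq)).mul_left
    (2 ^ (q - 1))).of_norm_bounded_eventually_nat ?_
  filter_upwards [eventually_ge_atTop 1] with n hn
  rw [norm_of_nonneg (by positivity)]
  exact weighted_rpow_le_of_abs_sub_sub_le hα hq hc hg hn

end OneSided

section DiffQuot

variable {d : ℤ → ℝ} {β q : ℝ}

theorem abs_sub_le_toReal_supDiffQuot {j : ℤ} (hj : j ≠ 0) (h : supDiffQuot d β j ≠ ⊤) (n : ℤ) :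
    |d (n + j) - d n| ≤ (supDiffQuot d β j).toReal * |(j : ℝ)| ^ β := by
  have hpos : 0 < |(j : ℝ)| ^ β := rpow_pos_of_pos (by simpa using hj) β
  rw [← div_le_iff₀ hpos, ← ENNReal.ofReal_le_iff_le_toReal h]
  exact le_iSup (fun n => ENNReal.ofReal (|d (n + j) - d n| / |(j : ℝ)| ^ β)) n

theorem supDiffQuot_ne_top (hq : 0 < q)
    (h : ∑' j : {j : ℤ // j ≠ 0}, supDiffQuot d β j ^ q / ENNReal.ofReal |(j : ℝ)| < ⊤)
    (j : {j : ℤ // j ≠ 0}) : supDiffQuot d β j ≠ ⊤ := by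
  intro htop
  have := ENNReal.ne_top_of_tsum_ne_top h.ne j
  simp [htop, ENNReal.top_rpow_of_pos hq, ENNReal.top_div] at this

theorem summable_toReal_supDiffQuot
    (h : ∑' j : {j : ℤ // j ≠ 0}, supDiffQuot d β j ^ q / ENNReal.ofReal |(j : ℝ)| < ⊤) :
    Summable fun j : {j : ℤ // j ≠ 0} => (supDiffQuot d β j).toReal ^ q / |(j : ℝ)| := by
  simpa [ENNReal.toReal_div, ENNReal.toReal_rpow] using ENNReal.summable_toReal h.ne

end DiffQuot

theorem summable_nat_succ_of_summable_ne_zero {a : ℤ → ℝ}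
    (h : Summable fun j : {j : ℤ // j ≠ 0} => a j / |(j : ℝ)|) :
    (Summable fun k : ℕ => a (k + 1) / ((k : ℝ) + 1)) ∧
      Summable fun k : ℕ => a (-(k + 1)) / ((k : ℝ) + 1) := by
  have hpos : Function.Injective fun k : ℕ => (⟨k + 1, by omega⟩ : {j : ℤ // j ≠ 0}) :=
    fun k l hkl => by simpa using hkl
  have hneg : Function.Injective fun k : ℕ => (⟨-(k + 1), by omega⟩ : {j : ℤ // j ≠ 0}) :=
    fun k l hkl => by simpa using hkl
  constructor
  · refine (h.comp_injective hpos).congr fun k => ?_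
    simp [abs_of_nonneg (by positivity : (0 : ℝ) ≤ k + 1)]
  · refine (h.comp_injective hneg).congr fun k => ?_
    simp only [Function.comp_apply, Int.cast_neg, Int.cast_add, Int.cast_natCast, Int.cast_one,
      abs_neg, abs_of_nonneg (by positivity : (0 : ℝ) ≤ k + 1)]

theorem abs_increment_sub_le_of_abs_rightDiff_sub_le {f s : ℤ → ℝ} {β : ℝ}
    (h : ∀ n j : ℤ, j ≠ 0 → |rightDiff f (n + j) - rightDiff f n| ≤ s j * |(j : ℝ)| ^ β)
    (k : ℕ) :
    |f (k + 1) - f k - -rightDiff f (-1)| ≤ s (k + 1) * ((k : ℝ) + 1) ^ β ∧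
      |f (-(k + 1 : ℕ)) - f (-k) - rightDiff f 0| ≤ s (-(k + 1)) * ((k : ℝ) + 1) ^ β := by
  constructor
  · convert h (-1) (k + 1) (by omega) using 1
    · rw [← abs_neg, rightDiff, rightDiff]
      push_cast
      ring_nf
    · push_cast
      rw [abs_of_nonneg (by positivity)]
  · convert h 0 (-(k + 1)) (by omega) using 1
    · rw [rightDiff, rightDiff]
      push_cast
      ring_nf
    · push_cast
      rw [abs_neg, abs_of_nonneg (by positivity)]

theorem stmt12_general (α q : ℝ) (hα0 : 1 < α) (hq : 1 ≤ q) (f : ℤ → ℝ)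
    (hf : ∑' j : {j : ℤ // j ≠ 0},
        (⨆ n : ℤ, ENNReal.ofReal
            (|(f (n + (j : ℤ)) - f (n + (j : ℤ) + 1)) - (f n - f (n + 1))| /
              |((j : ℤ) : ℝ)| ^ (α - 1))) ^ q /
          ENNReal.ofReal |((j : ℤ) : ℝ)| < ⊤) :
    ∑' n : ℤ, ENNReal.ofReal ((|f n| / (1 + |(n : ℝ)| ^ α)) ^ q / (1 + |(n : ℝ)|)) < ⊤ := by
  have hf' : ∑' j : {j : ℤ // j ≠ 0},
      supDiffQuot (rightDiff f) (α - 1) j ^ q / ENNReal.ofReal |(j : ℝ)| < ⊤ := hf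
  set s : ℤ → ℝ := fun j => (supDiffQuot (rightDiff f) (α - 1) j).toReal
  have hs (j : ℤ) : 0 ≤ s j := ENNReal.toReal_nonneg
  have hbound (n j : ℤ) (hj : j ≠ 0) :
      |rightDiff f (n + j) - rightDiff f n| ≤ s j * |(j : ℝ)| ^ (α - 1) :=
    abs_sub_le_toReal_supDiffQuot hj (supDiffQuot_ne_top (by linarith) hf' ⟨j, hj⟩) n
  obtain ⟨hright, hleft⟩ := summable_nat_succ_of_summable_ne_zero (a := fun j => s j ^ q)
    (summable_toReal_supDiffQuot hf')
  have hnat := summable_weighted_rpow_of_abs_sub_sub_le (g := fun n => f n)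
    (b := -rightDiff f (-1)) (c := fun k => s (k + 1)) hα0 hq (fun k => hs _) hright
    fun k => (abs_increment_sub_le_of_abs_rightDiff_sub_le hbound k).1
  have hneg := summable_weighted_rpow_of_abs_sub_sub_le (g := fun n => f (-n))
    (b := rightDiff f 0) (c := fun k => s (-(k + 1))) hα0 hq (fun k => hs _) hleft
    fun k => (abs_increment_sub_le_of_abs_rightDiff_sub_le hbound k).2
  refine Summable.tsum_ofReal_lt_top (summable_int_iff_summable_nat_and_neg.mpr ⟨?_, ?_⟩)
  · simpa using hnat
  · simpa using hneg

theorem stmt12 (α q : ℝ) (hα0 : 1 < α) (hα1 : α < 2) (hq : 1 ≤ q) (f : ℤ → ℝ)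
    (hf : ∑' j : {j : ℤ // j ≠ 0},
        (⨆ n : ℤ, ENNReal.ofReal
            (|(f (n + (j : ℤ)) - f (n + (j : ℤ) + 1)) - (f n - f (n + 1))| /
              |((j : ℤ) : ℝ)| ^ (α - 1))) ^ q /
          ENNReal.ofReal |((j : ℤ) : ℝ)| < ⊤) :
    ∑' n : ℤ, ENNReal.ofReal ((|f n| / (1 + |(n : ℝ)| ^ α)) ^ q / (1 + |(n : ℝ)|)) < ⊤ :=
  stmt12_general α q hα0 hq f hf
end
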